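/- Let E be a reflexive Banach space continuously embedded in a Banach space E₀, and let H⁺ be a trajectory space, i.e. an arbitrary subset of C([0,∞);E₀) ∩ L∞(0,∞;E). If there exists a minimal trajectory attractor U for the trajectory space H⁺, then there exists a global attractor A (in E₀) for H⁺, and for every t ≥ 0 one has A = {ξ(t) : ξ ∈ U}. -/

import Mathlib

open scoped NNReal
open Filter Topology

noncomputable section

variable {E E₀ : Type*} [NormedAddCommGroup E] [NormedSpace ℝ E]
  [NormedAddCommGroup E₀] [NormedSpace ℝ E₀]

/-- The translation (shift) operator `T(h)u(t) = u(t+h)` on `C([0,∞); E₀)`. -/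
def shiftOp (h : ℝ≥0) (u : C(ℝ≥0, E₀)) : C(ℝ≥0, E₀) :=
  u.comp ⟨fun t => t + h, by continuity⟩

/-- `u` takes values in `E` (via the embedding `j`) with `E`-norm bounded by `R`. -/
def BddInE (j : E →L[ℝ] E₀) (R : ℝ) (u : C(ℝ≥0, E₀)) : Prop :=
  ∀ t : ℝ≥0, ∃ x : E, j x = u t ∧ ‖x‖ ≤ R

/-- `u ∈ L∞(0,∞;E)`: `u` takes values in `E` with bounded `E`-norm. -/
def MemLinftyE (j : E →L[ℝ] E₀) (u : C(ℝ≥0, E₀)) : Prop :=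
  ∃ R : ℝ, BddInE j R u

/-- A family of trajectories is bounded in `L∞(0,∞;E)`. -/
def BddFamilyE (j : E →L[ℝ] E₀) (B : Set C(ℝ≥0, E₀)) : Prop :=
  ∃ R : ℝ, ∀ u ∈ B, BddInE j R u

/-- `P` is attracting for the trajectory space `Hplus`: for every `B ⊆ Hplus` bounded in
`L∞(0,∞;E)`, the shifts of `B` approach `P` uniformly, in the uniformity of uniform
convergence on compact subintervals on `C([0,∞); E₀)`
(i.e. `sup_{u∈B} inf_{v∈P} dist(T(h)u, v) → 0` as `h → ∞`). -/
def IsAttracting (j : E →L[ℝ] E₀) (Hplus P : Set C(ℝ≥0, E₀)) : Prop :=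
  ∀ B ⊆ Hplus, BddFamilyE j B →
    ∀ V ∈ uniformity C(ℝ≥0, E₀), ∃ h₀ : ℝ≥0, ∀ h : ℝ≥0, h₀ ≤ h →
      ∀ u ∈ B, ∃ v ∈ P, (shiftOp h u, v) ∈ V

/-- `U` is the minimal trajectory attractor for the trajectory space `Hplus`. -/
def IsMinTrajAttractor (j : E →L[ℝ] E₀) (Hplus U : Set C(ℝ≥0, E₀)) : Prop :=
  (IsCompact U ∧ BddFamilyE j U) ∧
    (∀ t : ℝ≥0, shiftOp t '' U = U) ∧
    IsAttracting j Hplus U ∧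
    ∀ U' : Set C(ℝ≥0, E₀),
      (IsCompact U' ∧ BddFamilyE j U') → (∀ t : ℝ≥0, shiftOp t '' U' = U') →
        IsAttracting j Hplus U' → U ⊆ U'

/-- `A ⊆ E` is the global attractor (in `E₀`) for the trajectory space `Hplus`:
`A` is compact in `E₀` and bounded in `E`; for every `B ⊆ Hplus` bounded in `L∞(0,∞;E)`
one has `sup_{u∈B} inf_{v∈A} ‖u(t) − v‖_{E₀} → 0` as `t → ∞`; and `A` is the minimal set
with these two properties. -/
def IsGlobalAttractor (j : E →L[ℝ] E₀) (Hplus : Set C(ℝ≥0, E₀)) (A : Set E) : Prop :=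
  (IsCompact (j '' A) ∧ Bornology.IsBounded A) ∧
    (∀ B ⊆ Hplus, BddFamilyE j B → ∀ ε : ℝ, 0 < ε → ∃ t₀ : ℝ≥0, ∀ t : ℝ≥0, t₀ ≤ t →
      ∀ u ∈ B, ∃ v ∈ A, ‖u t - j v‖ < ε) ∧
    ∀ A' : Set E,
      (IsCompact (j '' A') ∧ Bornology.IsBounded A') →
        (∀ B ⊆ Hplus, BddFamilyE j B → ∀ ε : ℝ, 0 < ε → ∃ t₀ : ℝ≥0, ∀ t : ℝ≥0, t₀ ≤ t →
          ∀ u ∈ B, ∃ v ∈ A', ‖u t - j v‖ < ε) →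
        A ⊆ A'

/-!
Take `A` to be the set of initial values of `U`; shift invariance of `U` makes it the set of
values at every time. Attraction towards a compact set `P` is the filter inequality
`shiftFilter B ≤ 𝓝ˢ P`, so it can be checked on cluster points of large shifts of `B`.
For minimality, let `C` be a closed set attracting the values of bounded trajectories. Cluster
points of large shifts lie in `U` and take all their values in `C`, so the compact set `S` of
such trajectories of `U` is attracting, and so is its core `W = ⋂ T, T(T) S`, which is compact
and, by Cantor's intersection theorem, shift-invariant. Minimality of `U` gives `U ⊆ W ⊆ S`.
-/
open scoped Uniformity
open Set

lemma IsCompact.le_nhdsSet_iff_of_hasBasis {X ι : Type*} [UniformSpace X] {p : ι → Prop}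
    {V : ι → Set (X × X)} (hb : (𝓤 X).HasBasis p V) {K : Set X} (hK : IsCompact K)
    {F : Filter X} : F ≤ 𝓝ˢ K ↔ ∀ i, p i → ∀ᶠ x in F, ∃ y ∈ K, (x, y) ∈ V i := by
  have hb' := hb.comap Prod.swap
  rw [comap_swap_uniformity] at hb'
  rw [(hK.nhdsSet_basis_uniformity hb').ge_iff]
  refine forall₂_congr fun i _ => Iff.of_eq (congrArg (· ∈ F) ?_)
  ext x
  simp [UniformSpace.ball]

lemma IsCompact.le_nhdsSet_inter_of_clusterPt {X : Type*} [TopologicalSpace X] {K Z : Set X}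
    (hK : IsCompact K) {F : Filter X} (hF : F ≤ 𝓝ˢ K) (hZ : ∀ x ∈ K, ClusterPt x F → x ∈ Z) :
    F ≤ 𝓝ˢ (K ∩ Z) := by
  refine le_iff_ultrafilter.2 fun 𝒰 h𝒰 => ?_
  obtain ⟨x, hxK, hx⟩ : ∃ x ∈ K, ↑𝒰 ≤ 𝓝 x := by
    by_contra! h
    have : Disjoint (𝓝ˢ K) 𝒰 := hK.disjoint_nhdsSet_left.2 fun x hx =>
      (Ultrafilter.disjoint_iff_not_le.2 (h x hx)).symm
    exact 𝒰.neBot.ne (this.eq_bot_of_ge (h𝒰.trans hF))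
  have hcl : ClusterPt x F := (Ultrafilter.clusterPt_iff.2 hx).mono h𝒰
  exact hx.trans (nhds_le_nhdsSet ⟨hxK, hZ x hxK hcl⟩)

lemma ClusterPt.mem_of_le_nhdsSet {X : Type*} [TopologicalSpace X] [RegularSpace X] {x : X}
    {F : Filter X} {C : Set X} (hx : ClusterPt x F) (hF : F ≤ 𝓝ˢ C) (hC : IsClosed C) :
    x ∈ C := by
  by_contra hxC
  have hdisj : Disjoint (𝓝ˢ C) (𝓝 x) := disjoint_nhdsSet_nhds.2 (hC.closure_eq.symm ▸ hxC)
  exact hx.ne (hdisj.symm.mono_right hF).eq_bot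

lemma image_iInter_image_eq_of_semiflow {X : Type*} [TopologicalSpace X] [T2Space X]
    (φ : ℝ≥0 → X → X) (hφ : ∀ t, Continuous (φ t)) (hφ_add : ∀ s t x, φ s (φ t x) = φ (s + t) x)
    {S : Set X} (hS : IsCompact S) (hSφ : ∀ t, MapsTo (φ t) S S) (t : ℝ≥0) :
    φ t '' ⋂ T, φ T '' S = ⋂ T, φ T '' S := by
  have hanti : ∀ {T T'}, T ≤ T' → φ T' '' S ⊆ φ T '' S := by
    rintro T T' hTT' _ ⟨x, hx, rfl⟩
    obtain ⟨r, rfl⟩ := exists_add_of_le hTT'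
    exact ⟨φ r x, hSφ r hx, hφ_add T r x⟩
  have hcompact : ∀ T, IsCompact (φ T '' S) := fun T => hS.image (hφ T)
  refine (image_subset_iff.2 fun x hx => mem_iInter.2 fun T => ?_).antisymm fun v hv => ?_
  · obtain ⟨y, hy, rfl⟩ := mem_iInter.1 hx T
    exact hanti (le_add_of_nonneg_left t.2) ⟨y, hy, (hφ_add t T y).symm⟩
  · let P : ℝ≥0 → Set X := fun T => φ T '' S ∩ φ t ⁻¹' {v}
    have hPclosed : ∀ T, IsClosed (P T) := fun T =>
      (hcompact T).isClosed.inter (isClosed_singleton.preimage (hφ t))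
    obtain ⟨w, hw⟩ := IsCompact.nonempty_iInter_of_directed_nonempty_isCompact_isClosed P
      (directed_of_isDirected_le fun T T' h => inter_subset_inter_left _ (hanti h))
      (fun T => by
        obtain ⟨y, hy, hyv⟩ := mem_iInter.1 hv (t + T)
        exact ⟨φ T y, ⟨y, hy, rfl⟩, by simp [hφ_add, hyv]⟩)
      (fun T => (hcompact T).of_isClosed_subset (hPclosed T) inter_subset_left) hPclosed
    exact ⟨w, mem_iInter.2 fun T => (mem_iInter.1 hw T).1, (mem_iInter.1 hw 0).2⟩

section Shift

variable {F : Type*} [NormedAddCommGroup F]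

lemma shiftOp_apply (h : ℝ≥0) (u : C(ℝ≥0, F)) (t : ℝ≥0) : shiftOp h u t = u (t + h) := rfl

lemma shiftOp_shiftOp (a b : ℝ≥0) (u : C(ℝ≥0, F)) :
    shiftOp a (shiftOp b u) = shiftOp (a + b) u := by
  ext x
  simp only [shiftOp_apply, add_assoc]

lemma shiftOp_zero : shiftOp 0 = (id : C(ℝ≥0, F) → C(ℝ≥0, F)) := by
  ext u x
  simp [shiftOp_apply]

lemma continuous_shiftOp (h : ℝ≥0) : Continuous (shiftOp h : C(ℝ≥0, F) → C(ℝ≥0, F)) :=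
  ContinuousMap.continuous_precomp _

def shiftFilter (B : Set C(ℝ≥0, F)) : Filter C(ℝ≥0, F) :=
  map (fun p : ℝ≥0 × C(ℝ≥0, F) => shiftOp p.1 p.2) (atTop ×ˢ 𝓟 B)

lemma eventually_shiftFilter_iff {B : Set C(ℝ≥0, F)} {Q : C(ℝ≥0, F) → Prop} :
    (∀ᶠ u in shiftFilter B, Q u) ↔ ∃ h₀ : ℝ≥0, ∀ h, h₀ ≤ h → ∀ u ∈ B, Q (shiftOp h u) := by
  simp only [shiftFilter, eventually_map, eventually_prod_principal_iff, eventually_atTop]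

lemma map_shiftOp_shiftFilter (T : ℝ≥0) (B : Set C(ℝ≥0, F)) :
    map (shiftOp T) (shiftFilter B) = shiftFilter B := by
  ext s
  change (∀ᶠ u in shiftFilter B, shiftOp T u ∈ s) ↔ ∀ᶠ u in shiftFilter B, u ∈ s
  simp only [eventually_shiftFilter_iff, shiftOp_shiftOp]
  constructor
  · rintro ⟨h₀, hs⟩
    refine ⟨h₀ + T, fun h hh u hu => ?_⟩
    simpa [add_tsub_cancel_of_le (le_of_add_le_right hh)] using
      hs (h - T) (le_tsub_of_add_le_right hh) u hu
  · rintro ⟨h₀, hs⟩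
    exact ⟨h₀, fun h hh u hu => hs (T + h) (le_add_left hh) u hu⟩

lemma map_eval_shiftFilter (t : ℝ≥0) (B : Set C(ℝ≥0, F)) :
    map (fun u : C(ℝ≥0, F) => u t) (shiftFilter B) = map (fun u => u 0) (shiftFilter B) := by
  conv_rhs => rw [← map_shiftOp_shiftFilter t B, map_map]
  congr 1
  ext u
  simp [shiftOp_apply]

lemma shiftFilter_le_nhdsSet_inter_setOf_forall_mem {B U : Set C(ℝ≥0, F)} {C : Set F}
    (hU : IsCompact U) (hBU : shiftFilter B ≤ 𝓝ˢ U) (hC : IsClosed C)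
    (hBC : map (fun u => u 0) (shiftFilter B) ≤ 𝓝ˢ C) :
    shiftFilter B ≤ 𝓝ˢ (U ∩ {u | ∀ t, u t ∈ C}) :=
  hU.le_nhdsSet_inter_of_clusterPt hBU fun _ _ hu t =>
    (hu.map (continuous_eval_const t).continuousAt tendsto_map).mem_of_le_nhdsSet
      ((map_eval_shiftFilter t B).trans_le hBC) hC

lemma shiftFilter_le_nhdsSet_iInter_image_shiftOp {B S : Set C(ℝ≥0, F)} (hS : IsCompact S)
    (hBS : shiftFilter B ≤ 𝓝ˢ S) : shiftFilter B ≤ 𝓝ˢ (⋂ T, shiftOp T '' S) := by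
  refine (hS.le_nhdsSet_inter_of_clusterPt hBS fun _ _ hu => mem_iInter.2 fun T => ?_).trans
    (nhdsSet_mono inter_subset_right)
  refine hu.mem_of_le_nhdsSet ?_ (hS.image (continuous_shiftOp T)).isClosed
  rw [← map_shiftOp_shiftFilter T B]
  exact (map_mono hBS).trans ((continuous_shiftOp T).tendsto_nhdsSet (mapsTo_image _ _))

lemma image_eval_eq_of_forall_shiftOp_image_eq {U : Set C(ℝ≥0, F)}
    (hU : ∀ t, shiftOp t '' U = U) (t : ℝ≥0) :
    (fun ξ : C(ℝ≥0, F) => ξ t) '' U = (fun ξ => ξ 0) '' U := by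
  conv_rhs => rw [← hU t, image_image]
  simp [shiftOp_apply]

end Shift

lemma isAttracting_iff_shiftFilter_le (j : E →L[ℝ] E₀) (Hplus : Set C(ℝ≥0, E₀))
    {P : Set C(ℝ≥0, E₀)} (hP : IsCompact P) :
    IsAttracting j Hplus P ↔ ∀ B ⊆ Hplus, BddFamilyE j B → shiftFilter B ≤ 𝓝ˢ P := by
  simp [IsAttracting, hP.le_nhdsSet_iff_of_hasBasis (𝓤 _).basis_sets, eventually_shiftFilter_iff]

lemma map_eval_zero_shiftFilter_le_nhdsSet_image_iff (j : E →L[ℝ] E₀) {A : Set E}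
    (hA : IsCompact (j '' A)) (B : Set C(ℝ≥0, E₀)) :
    map (fun u : C(ℝ≥0, E₀) => u 0) (shiftFilter B) ≤ 𝓝ˢ (j '' A) ↔
      ∀ ε : ℝ, 0 < ε → ∃ t₀ : ℝ≥0, ∀ t : ℝ≥0, t₀ ≤ t → ∀ u ∈ B, ∃ v ∈ A, ‖u t - j v‖ < ε := by
  simp [hA.le_nhdsSet_iff_of_hasBasis Metric.uniformity_basis_dist, eventually_shiftFilter_iff,
    shiftOp_apply, dist_eq_norm]

lemma IsMinTrajAttractor.apply_mem_of_map_le_nhdsSet {j : E →L[ℝ] E₀}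
    {Hplus U : Set C(ℝ≥0, E₀)} (hU : IsMinTrajAttractor j Hplus U) {C : Set E₀}
    (hC : IsClosed C)
    (hattr : ∀ B ⊆ Hplus, BddFamilyE j B → map (fun u => u 0) (shiftFilter B) ≤ 𝓝ˢ C)
    {ξ : C(ℝ≥0, E₀)} (hξ : ξ ∈ U) (t : ℝ≥0) : ξ t ∈ C := by
  obtain ⟨⟨hUc, R, hR⟩, hUinv, hUattr, hUmin⟩ := hU
  rw [isAttracting_iff_shiftFilter_le j Hplus hUc] at hUattr
  set S := U ∩ {u | ∀ t, u t ∈ C}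
  have hSc : IsCompact S := by
    refine hUc.inter_right ?_
    simp only [ofPred_forall]
    exact isClosed_iInter fun t => hC.preimage (continuous_eval_const t)
  have hSmaps : ∀ t, MapsTo (shiftOp t) S S := fun t u hu =>
    ⟨hUinv t ▸ mem_image_of_mem _ hu.1, fun s => hu.2 (s + t)⟩
  set W := ⋂ T, shiftOp T '' S
  have hWS : W ⊆ S := by
    simpa [shiftOp_zero] using iInter_subset (fun T => shiftOp T '' S) 0
  have hWc : IsCompact W :=
    hSc.of_isClosed_subset (isClosed_iInter fun T => (hSc.image (continuous_shiftOp T)).isClosed)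
      hWS
  have hW_attr : IsAttracting j Hplus W :=
    (isAttracting_iff_shiftFilter_le j Hplus hWc).2 fun B hB hBb =>
      shiftFilter_le_nhdsSet_iInter_image_shiftOp hSc <|
        shiftFilter_le_nhdsSet_inter_setOf_forall_mem hUc (hUattr B hB hBb) hC (hattr B hB hBb)
  have hUW : U ⊆ W := hUmin W ⟨hWc, R, fun u hu => hR u (hWS hu).1⟩
    (image_iInter_image_eq_of_semiflow shiftOp continuous_shiftOp shiftOp_shiftOp hSc hSmaps)
    hW_attr
  exact (hWS (hUW hξ)).2 t

theorem exists_global_attractor_of_minimal_trajectory_attractor_general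
    (j : E →L[ℝ] E₀) (hj : Function.Injective j)
    (Hplus : Set C(ℝ≥0, E₀))
    (U : Set C(ℝ≥0, E₀)) (hU : IsMinTrajAttractor j Hplus U) :
    ∃ A : Set E, IsGlobalAttractor j Hplus A ∧
      ∀ t : ℝ≥0, j '' A = (fun ξ : C(ℝ≥0, E₀) => ξ t) '' U := by
  have ⟨⟨hUc, R, hR⟩, hUinv, hUattr, _⟩ := hU
  set A : Set E := j ⁻¹' ((fun ξ => ξ 0) '' U)
  have hjA : ∀ t, j '' A = (fun ξ => ξ t) '' U := fun t => by
    rw [image_eval_eq_of_forall_shiftOp_image_eq hUinv t]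
    refine image_preimage_eq_of_subset ?_
    rintro _ ⟨ξ, hξ, rfl⟩
    obtain ⟨x, hx, -⟩ := hR ξ hξ 0
    exact ⟨x, hx⟩
  have hAc : IsCompact (j '' A) := hjA 0 ▸ hUc.image (continuous_eval_const 0)
  refine ⟨A, ⟨⟨hAc, ?_⟩, fun B hB hBb => ?_, fun A' ⟨hA'c, _⟩ hA'attr => ?_⟩, hjA⟩
  · refine isBounded_iff_forall_norm_le.2 ⟨R, ?_⟩
    rintro x ⟨ξ, hξ, hξx⟩
    obtain ⟨y, hy, hyR⟩ := hR ξ hξ 0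
    rwa [hj (hξx.symm.trans hy.symm)]
  · rw [← map_eval_zero_shiftFilter_le_nhdsSet_image_iff j hAc, hjA 0]
    exact (map_mono ((isAttracting_iff_shiftFilter_le j Hplus hUc).1 hUattr B hB hBb)).trans
      ((continuous_eval_const 0).tendsto_nhdsSet (mapsTo_image _ _))
  · rintro x ⟨ξ, hξ, hξx⟩
    have := hU.apply_mem_of_map_le_nhdsSet hA'c.isClosed
      (fun B hB hBb => (map_eval_zero_shiftFilter_le_nhdsSet_image_iff j hA'c B).2
        (hA'attr B hB hBb)) hξ 0
    exact hj.mem_set_image.1 (hξx ▸ this)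

/-- If the trajectory space `Hplus ⊆ C([0,∞);E₀) ∩ L∞(0,∞;E)` (with `E` a reflexive Banach
space continuously embedded in the Banach space `E₀` via `j`) possesses a minimal trajectory
attractor `U`, then it possesses a global attractor `A` (in `E₀`), and
`A = {ξ(t) : ξ ∈ U}` for every `t ≥ 0`. -/
theorem exists_global_attractor_of_minimal_trajectory_attractor
    [CompleteSpace E] [CompleteSpace E₀]
    (j : E →L[ℝ] E₀) (hj : Function.Injective j)
    (hrefl : Function.Surjective (NormedSpace.inclusionInDoubleDual ℝ E))
    (Hplus : Set C(ℝ≥0, E₀)) (hH : ∀ u ∈ Hplus, MemLinftyE j u)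
    (U : Set C(ℝ≥0, E₀)) (hU : IsMinTrajAttractor j Hplus U) :
    ∃ A : Set E, IsGlobalAttractor j Hplus A ∧
      ∀ t : ℝ≥0, j '' A = (fun ξ : C(ℝ≥0, E₀) => ξ t) '' U :=
  exists_global_attractor_of_minimal_trajectory_attractor_general j hj Hplus U hU
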